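/- Let t, t' ∈ ℝ⁴ satisfy (t⁰)² − |t⃗|² = 1, t⁰ > 0, and (t'⁰)² − |t⃗'|² = 1, t'⁰ > 0 (unit, future-pointing timelike vectors). Then t·t' ≥ 1, and for every p ∈ ℝ⁴ with (p⁰)² ≥ |p⃗|² and p⁰ ≥ 0 (p in the closed forward light cone) one has t·p ≥ (t·t' − √((t·t')² − 1))·(t'·p); equivalently, t·p ≥ e^{−ξ}·(t'·p), where ξ ≥ 0 is defined by cosh ξ = t·t'. -/

import Mathlib

/-! With `c = t·t'` and `λ = c - √(c² - 1)`, the smaller root of `λ² - 2cλ + 1 = 0`,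
the vector `q = t - λ t'` is null, and `q·t' = c - λ ≥ 0` forces it to be future pointing.
Two vectors of the closed forward light cone have nonnegative Minkowski product, so
`t·p - λ (t'·p) = q·p ≥ 0`. The bound `c ≥ 1` is the reverse Cauchy–Schwarz inequality. -/

/-- The Minkowski inner product on `ℝ⁴ = ℝ × ℝ³`: `x·y = x⁰y⁰ − x⃗·y⃗`. -/
def mink (x y : Fin 4 → ℝ) : ℝ :=
  x 0 * y 0 - (x 1 * y 1 + x 2 * y 2 + x 3 * y 3)

def IsFutureCausal (x : Fin 4 → ℝ) : Prop :=
  0 ≤ mink x x ∧ 0 ≤ x 0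

section Minkowski

variable (x y z : Fin 4 → ℝ)

lemma mink_self : mink x x = x 0 ^ 2 - (x 1 ^ 2 + x 2 ^ 2 + x 3 ^ 2) := by
  simp only [mink]; ring

lemma mink_sub_smul_left (a : ℝ) : mink (x - a • y) z = mink x z - a * mink y z := by
  simp only [mink, Pi.sub_apply, Pi.smul_apply, smul_eq_mul]; ring

lemma mink_sub_smul_self (a : ℝ) :
    mink (x - a • y) (x - a • y) = mink x x - 2 * a * mink x y + a ^ 2 * mink y y := by
  simp only [mink, Pi.sub_apply, Pi.smul_apply, smul_eq_mul]; ring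

lemma spatial_inner_sq_le :
    (x 1 * y 1 + x 2 * y 2 + x 3 * y 3) ^ 2 ≤
      (x 1 ^ 2 + x 2 ^ 2 + x 3 ^ 2) * (y 1 ^ 2 + y 2 ^ 2 + y 3 ^ 2) := by
  simpa [Fin.sum_univ_three] using
    Finset.sum_mul_sq_le_sq_mul_sq Finset.univ (fun i : Fin 3 => x i.succ) (fun i => y i.succ)

variable {x y}

lemma isFutureCausal_iff :
    IsFutureCausal x ↔ x 1 ^ 2 + x 2 ^ 2 + x 3 ^ 2 ≤ x 0 ^ 2 ∧ 0 ≤ x 0 := by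
  rw [IsFutureCausal, mink_self, sub_nonneg]

lemma sqrt_mink_self_le (hx0 : 0 ≤ x 0) : √(mink x x) ≤ x 0 :=
  (Real.sqrt_le_left hx0).2 (by rw [mink_self]; exact sub_le_self _ (by positivity))

lemma sqrt_mul_sqrt_le_mink (hx : IsFutureCausal x) (hy : IsFutureCausal y) :
    √(mink x x) * √(mink y y) ≤ mink x y := by
  set m := √(mink x x)
  set n := √(mink y y)
  have hm : x 1 ^ 2 + x 2 ^ 2 + x 3 ^ 2 = x 0 ^ 2 - m ^ 2 := by
    rw [Real.sq_sqrt hx.1, mink_self]; ring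
  have hn : y 1 ^ 2 + y 2 ^ 2 + y 3 ^ 2 = y 0 ^ 2 - n ^ 2 := by
    rw [Real.sq_sqrt hy.1, mink_self]; ring
  have hmx : m ≤ x 0 := sqrt_mink_self_le hx.2
  have hny : n ≤ y 0 := sqrt_mink_self_le hy.2
  have hsq : (x 1 * y 1 + x 2 * y 2 + x 3 * y 3) ^ 2 ≤ (x 0 * y 0 - m * n) ^ 2 := by
    nlinarith [spatial_inner_sq_le x y, sq_nonneg (x 0 * n - m * y 0)]
  have hpos : 0 ≤ x 0 * y 0 - m * n := by
    nlinarith [mul_le_mul hmx hny (Real.sqrt_nonneg _) hx.2]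
  have hspatial := (abs_le_of_sq_le_sq' hsq hpos).2
  unfold mink; linarith

lemma mink_nonneg (hx : IsFutureCausal x) (hy : IsFutureCausal y) : 0 ≤ mink x y :=
  (mul_nonneg (Real.sqrt_nonneg _) (Real.sqrt_nonneg _)).trans (sqrt_mul_sqrt_le_mink hx hy)

lemma time_nonneg_of_mink_nonneg (hy : 0 < mink y y) (hy0 : 0 ≤ y 0) (hx : 0 ≤ mink x x)
    (hxy : 0 ≤ mink x y) : 0 ≤ x 0 := by
  by_contra! hx0
  have hd : (x 1 * y 1 + x 2 * y 2 + x 3 * y 3) ^ 2 ≤ x 0 ^ 2 * (y 0 ^ 2 - mink y y) := by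
    rw [mink_self] at hx ⊢
    nlinarith [spatial_inner_sq_le x y, sq_nonneg (y 1), sq_nonneg (y 2), sq_nonneg (y 3)]
  have hd' : x 0 ^ 2 * y 0 ^ 2 ≤ (x 1 * y 1 + x 2 * y 2 + x 3 * y 3) ^ 2 := by
    unfold mink at hxy
    nlinarith [mul_nonpos_of_nonpos_of_nonneg hx0.le hy0]
  nlinarith [mul_pos (pow_pos (neg_pos.2 hx0) 2) hy]

end Minkowski

lemma isFutureCausal_sub_smul {t t' : Fin 4 → ℝ} (ht : mink t t = 1) (ht' : mink t' t' = 1)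
    (ht'0 : 0 ≤ t' 0) (hc : 1 ≤ mink t t') :
    IsFutureCausal (t - (mink t t' - √(mink t t' ^ 2 - 1)) • t') := by
  set c := mink t t'
  set s := √(c ^ 2 - 1)
  have hs : s ^ 2 = c ^ 2 - 1 := Real.sq_sqrt (by nlinarith)
  have hnull : mink (t - (c - s) • t') (t - (c - s) • t') = 0 := by
    rw [mink_sub_smul_self, ht, ht']
    linear_combination hs
  have hq't : mink (t - (c - s) • t') t' = s := by
    rw [mink_sub_smul_left, ht']
    ring
  exact ⟨hnull.ge, time_nonneg_of_mink_nonneg (by rw [ht']; exact one_pos) ht'0 hnull.ge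
    (hq't.symm ▸ Real.sqrt_nonneg _)⟩

/-- For unit, future-pointing timelike vectors `t, t'` one has `t·t' ≥ 1`, and for every
`p` in the closed forward light cone, `t·p ≥ (t·t' − √((t·t')² − 1))·(t'·p)`
(i.e. `t·p ≥ e^{−ξ} t'·p` with `cosh ξ = t·t'`, `ξ ≥ 0`). -/
theorem stmt11 (t t' : Fin 4 → ℝ)
    (ht : mink t t = 1) (ht0 : 0 < t 0)
    (ht' : mink t' t' = 1) (ht'0 : 0 < t' 0) :
    1 ≤ mink t t' ∧
    ∀ p : Fin 4 → ℝ, (p 1) ^ 2 + (p 2) ^ 2 + (p 3) ^ 2 ≤ (p 0) ^ 2 → 0 ≤ p 0 →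
      (mink t t' - Real.sqrt ((mink t t') ^ 2 - 1)) * mink t' p ≤ mink t p := by
  have hc : 1 ≤ mink t t' := by
    simpa [ht, ht'] using sqrt_mul_sqrt_le_mink (x := t) (y := t')
      ⟨ht.ge.trans' zero_le_one, ht0.le⟩ ⟨ht'.ge.trans' zero_le_one, ht'0.le⟩
  refine ⟨hc, fun p hp hp0 => ?_⟩
  have hqp := mink_nonneg (isFutureCausal_sub_smul ht ht' ht'0.le hc)
    (isFutureCausal_iff.2 ⟨hp, hp0⟩)
  rw [mink_sub_smul_left] at hqp
  linarith
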